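/- arXiv:math-ph/0604035 — 3 statements merged into one kernel-verified Lean document; each statement's English description precedes it below -/
import Mathlib

section
/- Let q ∈ ℂ*, k₊, k₋ ∈ ℂ, and let A = k₊ σ₊ + k₋ σ₋ + ε₊ q^{σ₃/2} and A* = k₋ σ₊ + k₊ σ₋ + ε₋ q^{-σ₃/2} be 2×2 complex matrices, where σ₊ = [[0,1],[0,0]], σ₋ = [[0,0],[1,0]], and q^{±σ₃/2} = diag(q^{±1/2}, q^{∓1/2}). Then [A,[A,[A,A*]_q]_{q^{-1}}] = ρ [A,A*] with ρ = (q^{1/2}+q^{-1/2})² k₊ k₋, where [X,Y]_q = q^{1/2} XY - q^{-1/2} YX and [X,Y] = XY - YX. -/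
set_option maxHeartbeats 1000000

open Matrix

/-- The tridiagonal relation `[A,[A,[A,A*]_q]_{q⁻¹}] = ρ [A,A*]` with
`ρ = (q^{1/2}+q^{-1/2})² kp km`, for the 2×2 matrices
`A = kpσ₊ + kmσ₋ + ep q^{σ₃/2}` and `A* = kmσ₊ + kpσ₋ + em q^{-σ₃/2}`.
Here `s` denotes a square root `q^{1/2}` of `q`, and
`[X,Y]_q = q^{1/2} XY − q^{-1/2} YX`. -/
theorem tridiagonal_relation_first (q s kp km ep em : ℂ) (hq : q ≠ 0) (hs : s * s = q)
    (A As : Matrix (Fin 2) (Fin 2) ℂ)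
    (hA : A = kp • !![(0 : ℂ), 1; 0, 0] + km • !![(0 : ℂ), 0; 1, 0]
            + ep • !![s, 0; 0, s⁻¹])
    (hAs : As = km • !![(0 : ℂ), 1; 0, 0] + kp • !![(0 : ℂ), 0; 1, 0]
            + em • !![s⁻¹, 0; 0, s]) :
    A * (s⁻¹ • (A * (s • (A * As) - s⁻¹ • (As * A)))
          - s • ((s • (A * As) - s⁻¹ • (As * A)) * A))
      - (s⁻¹ • (A * (s • (A * As) - s⁻¹ • (As * A)))
          - s • ((s • (A * As) - s⁻¹ • (As * A)) * A)) * A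
      = ((s + s⁻¹) ^ 2 * kp * km) • (A * As - As * A) := by
  have hA' : A = !![ep*s, kp; km, ep*s⁻¹] := by
    subst hA; ext i j; fin_cases i <;> fin_cases j <;> simp [mul_comm]
  have hAs' : As = !![em*s⁻¹, km; kp, em*s] := by
    subst hAs; ext i j; fin_cases i <;> fin_cases j <;> simp [mul_comm]
  subst hA' hAs'
  have hC : s • ((!![ep*s, kp; km, ep*s⁻¹]) * (!![em*s⁻¹, km; kp, em*s]))
      - s⁻¹ • ((!![em*s⁻¹, km; kp, em*s]) * (!![ep*s, kp; km, ep*s⁻¹]))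
      = !![s*kp^2 - s⁻¹*km^2 + s^2*s⁻¹*ep*em - s*s⁻¹^2*ep*em, s^2*km*ep + s^2*kp*em - s⁻¹^2*km*ep - s⁻¹^2*kp*em; 0, s*km^2 - s⁻¹*kp^2 + s^2*s⁻¹*ep*em - s*s⁻¹^2*ep*em] := by
    simp only [mul_fin_two]
    ext i j; fin_cases i <;> fin_cases j <;>
      · simp
        ring
  rw [hC]
  have hD : s⁻¹ • ((!![ep*s, kp; km, ep*s⁻¹]) * !![s*kp^2 - s⁻¹*km^2 + s^2*s⁻¹*ep*em - s*s⁻¹^2*ep*em, s^2*km*ep + s^2*kp*em - s⁻¹^2*km*ep - s⁻¹^2*kp*em; 0, s*km^2 - s⁻¹*kp^2 + s^2*s⁻¹*ep*em - s*s⁻¹^2*ep*em])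
      - s • (!![s*kp^2 - s⁻¹*km^2 + s^2*s⁻¹*ep*em - s*s⁻¹^2*ep*em, s^2*km*ep + s^2*kp*em - s⁻¹^2*km*ep - s⁻¹^2*kp*em; 0, s*km^2 - s⁻¹*kp^2 + s^2*s⁻¹*ep*em - s*s⁻¹^2*ep*em] * (!![ep*s, kp; km, ep*s⁻¹]))
      = !![s*s⁻¹^2*kp*km*em + s^2*s⁻¹*km^2*ep + s^2*s⁻¹*kp^2*ep - s^2*s⁻¹^3*ep^2*em - s^3*km^2*ep - s^3*kp*km*em - s^3*kp^2*ep + 2*s^3*s⁻¹^2*ep^2*em - s^4*s⁻¹*ep^2*em, 2*s*s⁻¹*kp*km^2 - s⁻¹^2*kp^3 - s*s⁻¹^3*kp*ep*em - s^2*kp^3 + 2*s^2*s⁻¹^2*kp*ep*em - s^3*s⁻¹*kp*ep*em; 2*s*s⁻¹*kp^2*km - s⁻¹^2*km^3 - s*s⁻¹^3*km*ep*em - s^2*km^3 + 2*s^2*s⁻¹^2*km*ep*em - s^3*s⁻¹*km*ep*em, s*s⁻¹^2*km^2*ep + s*s⁻¹^2*kp^2*ep + s^2*s⁻¹*kp*km*em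 - s⁻¹^3*km^2*ep - s⁻¹^3*kp*km*em - s⁻¹^3*kp^2*ep - s*s⁻¹^4*ep^2*em + 2*s^2*s⁻¹^3*ep^2*em - s^3*s⁻¹^2*ep^2*em] := by
    simp only [mul_fin_two]
    ext i j; fin_cases i <;> fin_cases j <;>
      · simp
        ring
  rw [hD]
  simp only [mul_fin_two]
  ext i j; fin_cases i <;> fin_cases j <;>
    · simp
      ring
end

section
/- Let q ∈ ℂ*, k₊, k₋ ∈ ℂ, and let A* = k₋ σ₊ + k₊ σ₋ + ε₋ q^{-σ₃/2}, A = k₊ σ₊ + k₋ σ₋ + ε₊ q^{σ₃/2} as 2×2 complex matrices. Then [A*,[A*,[A*,A]_q]_{q^{-1}}] = ρ* [A*,A] with ρ* = (q^{1/2}+q^{-1/2})² k₊ k₋. -/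
open Matrix

set_option maxHeartbeats 1600000 in
/-- The dual tridiagonal relation `[A*,[A*,[A*,A]_q]_{q⁻¹}] = ρ* [A*,A]` with
`ρ* = (q^{1/2}+q^{-1/2})² kp km`, for the 2×2 matrices
`A = kpσ₊ + kmσ₋ + ep q^{σ₃/2}` and `A* = kmσ₊ + kpσ₋ + em q^{-σ₃/2}`.
Here `s` denotes a square root `q^{1/2}` of `q`. -/
theorem tridiagonal_relation_second (q s kp km ep em : ℂ) (hq : q ≠ 0) (hs : s * s = q)
    (A As : Matrix (Fin 2) (Fin 2) ℂ)
    (hA : A = kp • !![(0 : ℂ), 1; 0, 0] + km • !![(0 : ℂ), 0; 1, 0]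
            + ep • !![s, 0; 0, s⁻¹])
    (hAs : As = km • !![(0 : ℂ), 1; 0, 0] + kp • !![(0 : ℂ), 0; 1, 0]
            + em • !![s⁻¹, 0; 0, s]) :
    As * (s⁻¹ • (As * (s • (As * A) - s⁻¹ • (A * As)))
          - s • ((s • (As * A) - s⁻¹ • (A * As)) * As))
      - (s⁻¹ • (As * (s • (As * A) - s⁻¹ • (A * As)))
          - s • ((s • (As * A) - s⁻¹ • (A * As)) * As)) * As
      = ((s + s⁻¹) ^ 2 * kp * km) • (As * A - A * As) := by
  have hs0 : s ≠ 0 := fun h => hq (by rw [← hs, h, zero_mul])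
  obtain ⟨t, ht⟩ : ∃ t : ℂ, t = s⁻¹ := ⟨_, rfl⟩
  have hst : s * t = 1 := by rw [ht]; exact mul_inv_cancel₀ hs0
  rw [← ht] at hA hAs ⊢
  have hA' : A = !![ep * s, kp; km, ep * t] := by
    subst hA; ext i j; fin_cases i <;> fin_cases j <;> simp [mul_comm]
  have hAs' : As = !![em * t, km; kp, em * s] := by
    subst hAs; ext i j; fin_cases i <;> fin_cases j <;> simp [mul_comm]
  rw [hA', hAs']
  have hM1 : (!![em * t, km; kp, em * s] : Matrix (Fin 2) (Fin 2) ℂ)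
      * !![ep * s, kp; km, ep * t]
      = !![km ^ 2 + ep * em, t * (kp * em + km * ep);
           s * (kp * ep + km * em), kp ^ 2 + ep * em] := by
    ext i j
    fin_cases i <;> fin_cases j
    · simp [Matrix.mul_apply, Fin.sum_univ_succ]
      linear_combination (ep * em) * hst
    · simp [Matrix.mul_apply, Fin.sum_univ_succ]; ring
    · simp [Matrix.mul_apply, Fin.sum_univ_succ]; ring
    · simp [Matrix.mul_apply, Fin.sum_univ_succ]
      linear_combination (ep * em) * hst
  have hM2 : (!![ep * s, kp; km, ep * t] : Matrix (Fin 2) (Fin 2) ℂ)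
      * !![em * t, km; kp, em * s]
      = !![kp ^ 2 + ep * em, s * (kp * em + km * ep);
           t * (kp * ep + km * em), km ^ 2 + ep * em] := by
    ext i j
    fin_cases i <;> fin_cases j
    · simp [Matrix.mul_apply, Fin.sum_univ_succ]
      linear_combination (ep * em) * hst
    · simp [Matrix.mul_apply, Fin.sum_univ_succ]; ring
    · simp [Matrix.mul_apply, Fin.sum_univ_succ]; ring
    · simp [Matrix.mul_apply, Fin.sum_univ_succ]
      linear_combination (ep * em) * hst
  rw [hM1, hM2]
  have hE : t • ((!![em * t, km; kp, em * s] : Matrix (Fin 2) (Fin 2) ℂ)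
        * (s • !![km ^ 2 + ep * em, t * (kp * em + km * ep);
                  s * (kp * ep + km * em), kp ^ 2 + ep * em]
           - t • !![kp ^ 2 + ep * em, s * (kp * em + km * ep);
                    t * (kp * ep + km * em), km ^ 2 + ep * em]))
      - s • ((s • !![km ^ 2 + ep * em, t * (kp * em + km * ep);
                  s * (kp * ep + km * em), kp ^ 2 + ep * em]
           - t • !![kp ^ 2 + ep * em, s * (kp * em + km * ep);
                    t * (kp * ep + km * em), km ^ 2 + ep * em])
          * !![em * t, km; kp, em * s])
      = !![s * kp * km * ep - s * ep * em ^ 2 - t ^ 3 * kp ^ 2 * em - t ^ 3 * kp * km * ep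
             - t ^ 3 * km ^ 2 * em - t ^ 3 * ep * em ^ 2 + t * kp ^ 2 * em + t * km ^ 2 * em
             + 2 * t * ep * em ^ 2,
           -(s ^ 2 * km ^ 3) - s ^ 2 * km * ep * em - t ^ 2 * km ^ 3 - t ^ 2 * km * ep * em
             + 2 * kp ^ 2 * km + 2 * km * ep * em;
           -(s ^ 2 * kp ^ 3) - s ^ 2 * kp * ep * em - t ^ 2 * kp ^ 3 - t ^ 2 * kp * ep * em
             + 2 * kp * km ^ 2 + 2 * kp * ep * em,
           -(s ^ 3 * kp ^ 2 * em) - s ^ 3 * kp * km * ep - s ^ 3 * km ^ 2 * em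
             - s ^ 3 * ep * em ^ 2 + s * kp ^ 2 * em + s * km ^ 2 * em + 2 * s * ep * em ^ 2
             + t * kp * km * ep - t * ep * em ^ 2] := by
    ext i j
    fin_cases i <;> fin_cases j
    · simp [Matrix.mul_apply, Fin.sum_univ_succ]
      linear_combination (s * kp * km * ep - s * ep * em ^ 2 + t * kp ^ 2 * em
        + t * km ^ 2 * em + 2 * t * ep * em ^ 2) * hst
    · simp [Matrix.mul_apply, Fin.sum_univ_succ]
      linear_combination (2 * kp ^ 2 * km + 2 * km * ep * em) * hst
    · simp [Matrix.mul_apply, Fin.sum_univ_succ]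
      linear_combination (2 * kp * km ^ 2 + 2 * kp * ep * em) * hst
    · simp [Matrix.mul_apply, Fin.sum_univ_succ]
      linear_combination (s * kp ^ 2 * em + s * km ^ 2 * em + 2 * s * ep * em ^ 2
        + t * kp * km * ep - t * ep * em ^ 2) * hst
  rw [hE]
  ext i j
  fin_cases i <;> fin_cases j
  · simp [Matrix.mul_apply, Fin.sum_univ_succ]
    linear_combination (2 * kp ^ 3 * km - 2 * kp * km ^ 3) * hst
  · simp [Matrix.mul_apply, Fin.sum_univ_succ]
    linear_combination (s * kp ^ 2 * km * em + s * kp * km ^ 2 * ep - s * km ^ 3 * em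
      - s * km * ep * em ^ 2 - t * kp ^ 2 * km * em - t * kp * km ^ 2 * ep + t * km ^ 3 * em
      + t * km * ep * em ^ 2) * hst
  · simp [Matrix.mul_apply, Fin.sum_univ_succ]
    linear_combination (s * kp ^ 3 * em - s * kp ^ 2 * km * ep - s * kp * km ^ 2 * em
      + s * kp * ep * em ^ 2 - t * kp ^ 3 * em + t * kp ^ 2 * km * ep + t * kp * km ^ 2 * em
      - t * kp * ep * em ^ 2) * hst
  · simp [Matrix.mul_apply, Fin.sum_univ_succ]
    linear_combination (-2 * kp ^ 3 * km + 2 * kp * km ^ 3) * hst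
end

section
/- For generic parameters (specifically when e^{2α + kφ} ≠ 1 for all integers k with |k| ≤ N-1), the 2^N vectors ψ_ε = ⊗_{l=N}^{1}(e^{ε_l α + ε_l(∑_{k<l}ε_k)φ/2 + iθ}, 1)ᵀ, indexed by ε : Fin N → {-1,1}, are linearly independent in ℂ^{2^N}. -/
open Matrix Complex

/-- The tensor-product vector `ψ_ε = ⊗_{l=N}^{1} (e^{ε_l α + ε_l(∑_{k<l}ε_k)φ/2 + iθ}, 1)ᵀ`,
indexed by `Fin N → Bool` with `true ↔ f₊`. -/
noncomputable def psiVec (α φ θ : ℂ) {N : ℕ} (ε : Fin N → ℤ) : (Fin N → Bool) → ℂ :=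
  fun f => ∏ j, if f j then
      Complex.exp ((ε j : ℂ) * α
        + (ε j : ℂ) * (∑ k ∈ Finset.univ.filter (fun k => k < j), (ε k : ℂ)) * φ / 2
        + Complex.I * θ)
    else 1

/-!
Split off the last tensor slot: `ψ_{(ε, c)} = ψ_ε ⊗ (e^{±(α + S φ / 2) + iθ}, 1)ᵀ` with
`S = ∑ₖ εₖ`, the sign being that of `c`. The two possible last-slot vectors are independent
exactly when `e^{2α + Sφ} ≠ 1`, and `|S| ≤ N`. A family `uᵢ ⊗ w_{i,k}` with `(uᵢ)` independent
and each `(w_{i,k})_k` independent is independent, since pairing with a fixed second coordinate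
reduces a relation among them to relations among the `uᵢ`; induction on `N` concludes.
-/

section Kronecker

variable {K ι κ σ τ : Type*} [CommRing K] [Fintype ι] [Fintype κ]

theorem LinearIndependent.kronecker_fiberwise {u : ι → σ → K} {w : ι → κ → τ → K}
    (hu : LinearIndependent K u) (hw : ∀ i, LinearIndependent K (w i)) :
    LinearIndependent K fun p : ι × κ => fun x : σ × τ => u p.1 x.1 * w p.1 p.2 x.2 := by
  rw [Fintype.linearIndependent_iff] at hu ⊢
  intro g hg ⟨i, k⟩
  have hslice (t : τ) (i : ι) : ∑ k, g (i, k) * w i k t = 0 := by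
    refine hu (fun i => ∑ k, g (i, k) * w i k t) (funext fun s => ?_) i
    have hst := congrFun hg (s, t)
    simp only [Finset.sum_apply, Pi.smul_apply, smul_eq_mul, Fintype.sum_prod_type,
      Pi.zero_apply] at hst ⊢
    rw [← hst]
    refine Finset.sum_congr rfl fun i _ => ?_
    rw [Finset.sum_mul]
    exact Finset.sum_congr rfl fun k _ => by ring
  refine Fintype.linearIndependent_iff.mp (hw i) (fun k => g (i, k)) (funext fun t => ?_) k
  simpa [Finset.sum_apply] using hslice t i

theorem LinearIndependent.of_kronecker_fiberwise {ι' σ' : Type*} {v : ι' → σ' → K}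
    {u : ι → σ → K} {w : ι → κ → τ → K} (eι : ι × κ ≃ ι') (eσ : σ × τ ≃ σ')
    (hu : LinearIndependent K u) (hw : ∀ i, LinearIndependent K (w i))
    (hv : ∀ i k s t, v (eι (i, k)) (eσ (s, t)) = u i s * w i k t) :
    LinearIndependent K v := by
  refine (linearIndependent_equiv' eι ?_).mp ((hu.kronecker_fiberwise hw).map' _
    (LinearEquiv.ker (LinearEquiv.funCongrLeft K K eσ.symm)))
  funext ⟨i, k⟩ x
  obtain ⟨⟨s, t⟩, rfl⟩ := eσ.surjective x
  simp [hv]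

end Kronecker

theorem linearIndependent_ite_one {K : Type*} [CommRing K] [IsDomain K] {x : Bool → K}
    (hx : x true ≠ x false) : LinearIndependent K fun c (b : Bool) => if b then x c else 1 := by
  rw [Fintype.linearIndependent_iff]
  intro g hg
  have h₀ := congrFun hg false
  have h₁ := congrFun hg true
  simp only [Fintype.sum_bool, Pi.add_apply, Pi.smul_apply, smul_eq_mul, Pi.zero_apply,
    if_true, Bool.false_eq_true, if_false, mul_one] at h₀ h₁
  have htrue : g true = 0 := by
    have : g true * (x true - x false) = 0 := by linear_combination h₁ - x false * h₀
    exact (mul_eq_zero.mp this).resolve_right (sub_ne_zero.mpr hx)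
  intro c
  cases c
  · linear_combination h₀ - htrue
  · exact htrue

theorem abs_sum_sign_le {n : ℕ} (e : Fin n → Bool) :
    |∑ j, (if e j then (1 : ℤ) else -1)| ≤ n :=
  calc |∑ j, (if e j then (1 : ℤ) else -1)|
      ≤ ∑ j, |(if e j then (1 : ℤ) else -1)| := Finset.abs_sum_le_sum_abs _ _
    _ = n := by simp [apply_ite]

theorem psiVec_snoc (α φ θ : ℂ) {N : ℕ} (ε : Fin N → ℤ) (s : ℤ) (f : Fin N → Bool) (b : Bool) :
    psiVec α φ θ (Fin.snoc ε s) (Fin.snoc f b) = psiVec α φ θ ε f *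
      if b then exp (s * α + s * (∑ k, (ε k : ℂ)) * φ / 2 + I * θ) else 1 := by
  have hsum (j : Fin (N + 1)) :
      ∑ k ∈ Finset.univ.filter (· < j), ((Fin.snoc (α := fun _ => ℤ) ε s k : ℤ) : ℂ) =
        ∑ k ∈ Finset.univ.filter (fun k : Fin N => k.castSucc < j), (ε k : ℂ) := by
    rw [Finset.sum_filter, Finset.sum_filter, Fin.sum_univ_castSucc]
    simp [(Fin.le_last j).not_gt]
  simp only [psiVec, Fin.prod_univ_castSucc, Fin.snoc_castSucc, Fin.snoc_last, hsum,
    Fin.castSucc_lt_castSucc_iff, Fin.castSucc_lt_last, Finset.filter_true]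

/-- For generic parameters (`e^{2α+kφ} ≠ 1` for all integers `|k| ≤ N-1`), the `2^N`
vectors `ψ_ε`, indexed by sign sequences `ε : Fin N → {-1,1}`, are linearly
independent. -/
theorem psi_linearly_independent (α φ θ : ℂ) (N : ℕ)
    (h : ∀ k : ℤ, |k| ≤ (N : ℤ) - 1 → Complex.exp (2 * α + (k : ℂ) * φ) ≠ 1) :
    LinearIndependent ℂ
      (fun e : Fin N → Bool => psiVec α φ θ (fun j => if e j then (1 : ℤ) else -1)) := by
  induction N with
  | zero =>
    refine linearIndependent_unique_iff.mpr fun h0 => ?_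
    simpa [psiVec] using congrFun h0 finZeroElim
  | succ N ih =>
    set sgn : Bool → ℤ := fun b => if b then 1 else -1
    have hu := ih fun k hk => h k (by push_cast at hk ⊢; omega)
    have hw (e : Fin N → Bool) : LinearIndependent ℂ fun c (b : Bool) =>
        if b then exp (sgn c * α + sgn c * (∑ k, (sgn (e k) : ℂ)) * φ / 2 + I * θ) else 1 := by
      refine linearIndependent_ite_one fun heq => h (∑ k, sgn (e k)) ?_ ?_
      · have : |∑ k, sgn (e k)| ≤ N := abs_sum_sign_le e
        push_cast
        omega
      · rw [exp_eq_exp_iff_exp_sub_eq_one] at heq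
        rw [← heq]
        congr 1
        simp [sgn]
        ring
    let E : (Fin N → Bool) × Bool ≃ (Fin (N + 1) → Bool) :=
      (Equiv.prodComm _ _).trans (Fin.snocEquiv fun _ => Bool)
    refine hu.of_kronecker_fiberwise E E hw fun e c f b => ?_
    change psiVec α φ θ (sgn ∘ Fin.snoc e c) (Fin.snoc f b) = psiVec α φ θ (sgn ∘ e) f * _
    rw [Fin.comp_snoc, psiVec_snoc]
    rfl
end
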